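/- Data processing inequality: let X be an ℝ^p-valued random vector, Z an ℝ^r-valued random vector, and Y = (Y_1,…,Y_q) an ℝ^q-valued random vector with non-degenerate components, all defined on a common probability space, and suppose Y and Z are conditionally independent given X. Then T(Y|Z) ≤ T(Y|X). In particular, T(Y|h(X)) ≤ T(Y|X) for every measurable function h : ℝ^p → ℝ^r. -/

import Mathlib

open MeasureTheory ProbabilityTheory

/-- Azadkia–Chatterjee's rank correlation `ξ(Y | m)` of a real random variable `Y`
given a sub-σ-algebra `m`. -/
noncomputable def xiSigma {Ω : Type*} (m : MeasurableSpace Ω) [MeasurableSpace Ω]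
    (P : Measure Ω) (Y : Ω → ℝ) : ℝ :=
  (∫ y, variance (P[Set.indicator {ω | y ≤ Y ω} (fun _ => (1 : ℝ)) | m]) P ∂(P.map Y)) /
  (∫ y, variance (Set.indicator {ω | y ≤ Y ω} (fun _ => (1 : ℝ))) P ∂(P.map Y))

/-- Azadkia–Chatterjee's rank correlation `ξ(Y | X)`: conditioning on the σ-algebra
generated by the random vector `X`. -/
noncomputable def xi {Ω α : Type*} [MeasurableSpace Ω] [MeasurableSpace α]
    (P : Measure Ω) (Y : Ω → ℝ) (X : Ω → α) : ℝ :=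
  xiSigma (MeasurableSpace.comap X inferInstance) P Y

/-- The σ-algebra generated by the response variables with index `< i`,
i.e. by `(Y_1, …, Y_{i-1})`; for `i = 0` it is the trivial σ-algebra `⊥`,
so that `xiSigma (sigmaPast Y 0) P (Y 0) = ξ(Y_1 | ∅) = 0`. -/
def sigmaPast {Ω : Type*} {q : ℕ} (Y : Fin q → Ω → ℝ) (i : Fin q) :
    MeasurableSpace Ω :=
  ⨆ j : Fin q, ⨆ _ : j < i, MeasurableSpace.comap (Y j) inferInstance

/-- The extension `T(Y | X)` of Azadkia–Chatterjee's rank correlation to a vector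
`Y = (Y_1, …, Y_q)` of response variables, given the predictor vector `X`:
`T(Y|X) = 1 − (q − ∑_i ξ(Y_i | (X,Y_{i−1},…,Y_1))) / (q − ∑_i ξ(Y_i | (Y_{i−1},…,Y_1)))`. -/
noncomputable def T {Ω α : Type*} [MeasurableSpace Ω] [MeasurableSpace α]
    (P : Measure Ω) {q : ℕ} (Y : Fin q → Ω → ℝ) (X : Ω → α) : ℝ :=
  1 - ((q : ℝ) - ∑ i, xiSigma (MeasurableSpace.comap X inferInstance ⊔ sigmaPast Y i) P (Y i)) /
      ((q : ℝ) - ∑ i, xiSigma (sigmaPast Y i) P (Y i))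

/-- A real random variable is non-degenerate if it is not almost surely constant. -/
def Nondegenerate {Ω : Type*} [MeasurableSpace Ω] (P : Measure Ω) (Y : Ω → ℝ) : Prop :=
  ¬ ∃ c : ℝ, ∀ᵐ ω ∂P, Y ω = c

/-!
Conditioning on a larger σ-algebra can only increase the variance of a conditional probability
(law of total variance), so `ξ(Y_i | ·)` is monotone in the conditioning σ-algebra and `T(Y | ·)`
increases with each of the conditional terms `ξ(Y_i | (·, Y_{i-1}, …, Y_1))`. For `h(X)` this is
enough, as `σ(h(X)) ≤ σ(X)`. Under `Y ⟂ Z | X`, weak union gives `Y ⟂ Z | (X, Y_{i-1}, …, Y_1)`,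
so adding `Z` to `(X, Y_{i-1}, …, Y_1)` does not change the conditional probabilities of events
of `Y_i`, and `ξ(Y_i | Z, Y_{<i}) ≤ ξ(Y_i | X, Z, Y_{<i}) = ξ(Y_i | X, Y_{<i})`.
-/

open MeasurableSpace

section CondExp

variable {Ω : Type*} {m m₁ m₂ mΩ : MeasurableSpace Ω} {P : Measure Ω}

lemma variance_condExp_le [IsProbabilityMeasure P] (hm : m ≤ mΩ) {f : Ω → ℝ}
    (hf : MemLp f 2 P) : Var[P[f | m]; P] ≤ Var[f; P] := by
  have hcondVar : 0 ≤ P[Var[f; P | m]] :=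
    integral_nonneg_of_ae (condExp_nonneg (.of_forall fun ω => sq_nonneg _))
  linarith [integral_condVar_add_variance_condExp hm hf]

lemma variance_condExp_mono [IsProbabilityMeasure P] (h : m₁ ≤ m₂) (hm₂ : m₂ ≤ mΩ)
    {f : Ω → ℝ} (hf : MemLp f 2 P) : Var[P[f | m₁]; P] ≤ Var[P[f | m₂]; P] :=
  calc Var[P[f | m₁]; P] = Var[P[P[f | m₂] | m₁]; P] :=
        variance_congr (condExp_condExp_of_le h hm₂).symm
    _ ≤ Var[P[f | m₂]; P] := variance_condExp_le (h.trans hm₂) (hf.condExp one_le_two)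

lemma setIntegral_inter_eq_setIntegral_mul_condExp [IsFiniteMeasure P] (hm : m ≤ mΩ)
    {h : Ω → ℝ} (hh : StronglyMeasurable[m] h) {C : ℝ} (hC : ∀ᵐ ω ∂P, ‖h ω‖ ≤ C)
    {c d : Set Ω} (hc : MeasurableSet[m] c) (hd : MeasurableSet d) :
    ∫ ω in c ∩ d, h ω ∂P = ∫ ω in c, h ω * (P⟦d | m⟧) ω ∂P := by
  have hind : Integrable (d.indicator fun _ => (1 : ℝ)) P := (integrable_const 1).indicator hd
  calc ∫ ω in c ∩ d, h ω ∂P = ∫ ω in c, (h * d.indicator fun _ => (1 : ℝ)) ω ∂P := by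
        rw [← setIntegral_indicator hd]
        congr with ω
        by_cases hω : ω ∈ d <;> simp [hω]
    _ = ∫ ω in c, (P[h * d.indicator fun _ => (1 : ℝ) | m]) ω ∂P :=
        (setIntegral_condExp hm (hind.bdd_mul (hh.mono hm).aestronglyMeasurable hC) hc).symm
    _ = ∫ ω in c, h ω * (P⟦d | m⟧) ω ∂P :=
        setIntegral_congr_ae (hm c hc) <| by
          filter_upwards [condExp_stronglyMeasurable_mul_of_bound hm hh hind C hC] with ω hω _
          exact hω

lemma ae_norm_condExp_indicator_le_one (s : Set Ω) : ∀ᵐ ω ∂P, ‖(P⟦s | m⟧) ω‖ ≤ 1 :=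
  ae_bdd_norm_condExp_of_ae_bdd_norm (.of_forall fun ω => by by_cases hω : ω ∈ s <;> simp [hω])

lemma isPiSystem_image2_inter (m₁ m₂ : MeasurableSpace Ω) :
    IsPiSystem (Set.image2 (· ∩ ·) {s | MeasurableSet[m₁] s} {t | MeasurableSet[m₂] t}) := by
  rintro _ ⟨s₁, hs₁, t₁, ht₁, rfl⟩ _ ⟨s₂, hs₂, t₂, ht₂, rfl⟩ -
  refine ⟨s₁ ∩ s₂, hs₁.inter hs₂, t₁ ∩ t₂, ht₁.inter ht₂, ?_⟩
  simp only [Set.inter_inter_inter_comm]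

lemma sup_eq_generateFrom_image2_inter (m₁ m₂ : MeasurableSpace Ω) :
    m₁ ⊔ m₂ = generateFrom (Set.image2 (· ∩ ·) {s | MeasurableSet[m₁] s}
      {t | MeasurableSet[m₂] t}) := by
  refine le_antisymm (sup_le ?_ ?_) (generateFrom_le ?_)
  · exact fun s hs => measurableSet_generateFrom ⟨s, hs, Set.univ, .univ, Set.inter_univ s⟩
  · exact fun t ht => measurableSet_generateFrom ⟨Set.univ, .univ, t, ht, Set.univ_inter t⟩
  · rintro _ ⟨s, hs, t, ht, rfl⟩
    exact (le_sup_left (b := m₂) s hs).inter (le_sup_right (a := m₁) t ht)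

lemma ae_eq_condExp_sup_of_forall_setIntegral_inter_eq [IsFiniteMeasure P]
    (hm₁ : m₁ ≤ mΩ) (hm₂ : m₂ ≤ mΩ) {f g : Ω → ℝ} (hf : Integrable f P) (hg : Integrable g P)
    (hgm : StronglyMeasurable[m₁ ⊔ m₂] g)
    (h : ∀ s t, MeasurableSet[m₁] s → MeasurableSet[m₂] t →
      ∫ ω in s ∩ t, g ω ∂P = ∫ ω in s ∩ t, f ω ∂P) :
    g =ᵐ[P] P[f | m₁ ⊔ m₂] := by
  have hm : m₁ ⊔ m₂ ≤ mΩ := sup_le hm₁ hm₂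
  refine ae_eq_condExp_of_forall_setIntegral_eq hm hf (fun _ _ _ => hg.integrableOn)
    (fun s hs _ => ?_) hgm.aestronglyMeasurable
  induction s, hs using induction_on_inter (sup_eq_generateFrom_image2_inter m₁ m₂)
    (isPiSystem_image2_inter m₁ m₂) with
  | empty => simp
  | basic _ hst =>
    obtain ⟨s, hs, t, ht, rfl⟩ := hst
    exact h s t hs ht
  | compl s hs hs_eq =>
    have hsΩ : MeasurableSet[mΩ] s := hm s hs
    have huniv := h Set.univ Set.univ .univ .univ
    simp only [Set.inter_univ, Measure.restrict_univ] at huniv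
    linarith [integral_add_compl hsΩ hg, integral_add_compl hsΩ hf, hs_eq (measure_lt_top P s)]
  | iUnion s hdisj hs hs_eq =>
    have hsΩ i : MeasurableSet[mΩ] (s i) := hm _ (hs i)
    rw [integral_iUnion hsΩ hdisj hg.integrableOn, integral_iUnion hsΩ hdisj hf.integrableOn]
    exact tsum_congr fun i => hs_eq i (measure_lt_top P _)

end CondExp

section CondIndep

variable {Ω : Type*} {m' m₁ m₂ mΩ : MeasurableSpace Ω} [StandardBorelSpace Ω]
  {hm' : m' ≤ mΩ} {P : Measure Ω} [IsFiniteMeasure P]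

lemma condExp_indicator_sup_ae_eq_of_condIndep (h : CondIndep m' m₁ m₂ hm' P) (hm₁ : m₁ ≤ mΩ)
    (hm₂ : m₂ ≤ mΩ) {s : Set Ω} (hs : MeasurableSet[m₁] s) :
    P⟦s | m' ⊔ m₂⟧ =ᵐ[P] P⟦s | m'⟧ := by
  have hprod := (condIndep_iff m' m₁ m₂ hm' hm₁ hm₂ P).1 h
  have hsΩ : MeasurableSet[mΩ] s := hm₁ s hs
  refine (ae_eq_condExp_sup_of_forall_setIntegral_inter_eq hm' hm₂
    ((integrable_const 1).indicator hsΩ) integrable_condExp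
    (stronglyMeasurable_condExp.mono le_sup_left) fun c d hc hd => ?_).symm
  have hdΩ : MeasurableSet[mΩ] d := hm₂ d hd
  calc ∫ ω in c ∩ d, (P⟦s | m'⟧) ω ∂P = ∫ ω in c, (P⟦s | m'⟧) ω * (P⟦d | m'⟧) ω ∂P :=
        setIntegral_inter_eq_setIntegral_mul_condExp hm' stronglyMeasurable_condExp
          (ae_norm_condExp_indicator_le_one s) hc hdΩ
    _ = ∫ ω in c, (P⟦s ∩ d | m'⟧) ω ∂P :=
        setIntegral_congr_ae (hm' c hc) <| by
          filter_upwards [hprod s d hs hd] with ω hω _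
          exact hω.symm
    _ = ∫ ω in c, (s ∩ d).indicator (fun _ => (1 : ℝ)) ω ∂P :=
        setIntegral_condExp hm' ((integrable_const 1).indicator (hsΩ.inter hdΩ)) hc
    _ = ∫ ω in c ∩ d, s.indicator (fun _ => (1 : ℝ)) ω ∂P := by
        rw [← setIntegral_indicator hdΩ, Set.indicator_indicator, Set.inter_comm]

lemma condIndep_of_condExp_indicator_sup_ae_eq (hm₁ : m₁ ≤ mΩ) (hm₂ : m₂ ≤ mΩ)
    (h : ∀ t, MeasurableSet[m₂] t → P⟦t | m' ⊔ m₁⟧ =ᵐ[P] P⟦t | m'⟧) :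
    CondIndep m' m₁ m₂ hm' P := by
  refine (condIndep_iff m' m₁ m₂ hm' hm₁ hm₂ P).2 fun s t hs ht => ?_
  have hm'₁ : m' ⊔ m₁ ≤ mΩ := sup_le hm' hm₁
  have hsΩ : MeasurableSet[mΩ] s := hm₁ s hs
  have htΩ : MeasurableSet[mΩ] t := hm₂ t ht
  have hs' : StronglyMeasurable[m' ⊔ m₁] (s.indicator fun _ => (1 : ℝ)) :=
    stronglyMeasurable_const.indicator (le_sup_right (a := m') s hs)
  have hs_bound : ∀ᵐ ω ∂P, ‖s.indicator (fun _ => (1 : ℝ)) ω‖ ≤ 1 :=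
    .of_forall fun ω => by by_cases hω : ω ∈ s <;> simp [hω]
  have ht_int : Integrable (t.indicator fun _ => (1 : ℝ)) P := (integrable_const 1).indicator htΩ
  calc P⟦s ∩ t | m'⟧
      =ᵐ[P] P[P[s.indicator (fun _ => (1 : ℝ)) * t.indicator (fun _ => 1) | m' ⊔ m₁] | m'] := by
        rw [show (s ∩ t).indicator (fun _ => (1 : ℝ)) = _ from Set.inter_indicator_one]
        exact (condExp_condExp_of_le le_sup_left hm'₁).symm
    _ =ᵐ[P] P[s.indicator (fun _ => (1 : ℝ)) * P⟦t | m'⟧ | m'] := by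
        refine condExp_congr_ae ?_
        filter_upwards [condExp_stronglyMeasurable_mul_of_bound hm'₁ hs' ht_int 1 hs_bound,
          h t ht] with ω hmul ht_eq
        rw [hmul, Pi.mul_apply, ht_eq, Pi.mul_apply]
    _ =ᵐ[P] P⟦s | m'⟧ * P⟦t | m'⟧ :=
        condExp_mul_of_stronglyMeasurable_right stronglyMeasurable_condExp
          (integrable_condExp.bdd_mul (stronglyMeasurable_const.indicator hsΩ).aestronglyMeasurable
            hs_bound)
          ((integrable_const 1).indicator hsΩ)

/-- The weak union property of conditional independence. -/
lemma condIndep_sup_left_of_le (h : CondIndep m' m₁ m₂ hm' P) (hm₁ : m₁ ≤ mΩ)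
    (hm₂ : m₂ ≤ mΩ) {mB : MeasurableSpace Ω} (hB : mB ≤ m₁) :
    CondIndep (m' ⊔ mB) m₁ m₂ (sup_le hm' (hB.trans hm₁)) P := by
  refine condIndep_of_condExp_indicator_sup_ae_eq hm₁ hm₂ fun t ht => ?_
  have hdrop : P⟦t | m' ⊔ m₁⟧ =ᵐ[P] P⟦t | m'⟧ :=
    condExp_indicator_sup_ae_eq_of_condIndep (CondIndep.symm h) hm₂ hm₁ ht
  calc P⟦t | m' ⊔ mB ⊔ m₁⟧ = P⟦t | m' ⊔ m₁⟧ := by rw [sup_assoc, sup_eq_right.2 hB]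
    _ =ᵐ[P] P⟦t | m'⟧ := hdrop
    _ = P[P⟦t | m'⟧ | m' ⊔ mB] :=
        (condExp_of_stronglyMeasurable (sup_le hm' (hB.trans hm₁))
          (stronglyMeasurable_condExp.mono le_sup_left) integrable_condExp).symm
    _ =ᵐ[P] P[P⟦t | m' ⊔ m₁⟧ | m' ⊔ mB] := condExp_congr_ae hdrop.symm
    _ =ᵐ[P] P⟦t | m' ⊔ mB⟧ := condExp_condExp_of_le (sup_le_sup_left hB _) (sup_le hm' hm₁)

end CondIndep

section Xi

variable {Ω : Type*} {m m₁ m₂ mΩ : MeasurableSpace Ω} {P : Measure Ω} {Y : Ω → ℝ}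

lemma xiSigma_congr (h : ∀ y, P⟦{ω | y ≤ Y ω} | m₁⟧ =ᵐ[P] P⟦{ω | y ≤ Y ω} | m₂⟧) :
    xiSigma m₁ P Y = xiSigma m₂ P Y := by
  simp only [xiSigma, variance_congr (h _)]

variable [IsProbabilityMeasure P]

lemma memLp_indicator_setOf_le (hY : Measurable Y) (y : ℝ) :
    MemLp ({ω | y ≤ Y ω}.indicator fun _ => (1 : ℝ)) 2 P :=
  (memLp_const (1 : ℝ)).indicator (measurableSet_le measurable_const hY)

lemma measurable_variance_condExp_indicator (hY : Measurable Y) :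
    Measurable fun y => Var[P⟦{ω | y ≤ Y ω} | m⟧; P] := by
  have hint y : Integrable ({ω | y ≤ Y ω}.indicator fun _ => (1 : ℝ)) P :=
    (integrable_const 1).indicator (measurableSet_le measurable_const hY)
  have hanti {y y'} (h : y ≤ y') :
      P⟦{ω | y' ≤ Y ω} | m⟧ ≤ᵐ[P] P⟦{ω | y ≤ Y ω} | m⟧ :=
    condExp_mono (hint y') (hint y) <| .of_forall <|
      Set.indicator_le_indicator_of_subset (fun _ hω => h.trans hω) fun _ => zero_le_one
  simp_rw [variance_eq_sub ((memLp_indicator_setOf_le hY _).condExp (m := m) one_le_two)]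
  refine (Antitone.measurable fun y y' h => ?_).sub
    ((Antitone.measurable fun y y' h => ?_).pow_const 2)
  · refine integral_mono_ae
      ((memLp_indicator_setOf_le hY y').condExp (m := m) one_le_two).integrable_sq
      ((memLp_indicator_setOf_le hY y).condExp (m := m) one_le_two).integrable_sq ?_
    filter_upwards [hanti h, condExp_nonneg (m := m) (μ := P)
      (.of_forall fun ω => Set.indicator_nonneg (fun _ _ => zero_le_one' ℝ) ω)] with ω hle h0
    exact pow_le_pow_left₀ h0 hle 2
  · exact integral_mono_ae integrable_condExp integrable_condExp (hanti h)

lemma integrable_variance_condExp_indicator (hY : Measurable Y) :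
    Integrable (fun y => Var[P⟦{ω | y ≤ Y ω} | m⟧; P]) (P.map Y) := by
  have := Measure.isProbabilityMeasure_map (μ := P) hY.aemeasurable
  refine .of_bound (measurable_variance_condExp_indicator hY).aestronglyMeasurable 1
    (.of_forall fun y => ?_)
  rw [Real.norm_of_nonneg (variance_nonneg _ _)]
  calc Var[P⟦{ω | y ≤ Y ω} | m⟧; P] ≤ ((1 - (-1)) / 2) ^ 2 := by
        refine variance_le_sq_of_bounded ?_ integrable_condExp.aemeasurable
        filter_upwards [ae_norm_condExp_indicator_le_one (m := m) (P := P) {ω | y ≤ Y ω}]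
          with ω hω
        exact abs_le.1 hω
    _ = 1 := by norm_num

lemma xiSigma_mono (h : m₁ ≤ m₂) (hm₂ : m₂ ≤ mΩ) (hY : Measurable Y) :
    xiSigma m₁ P Y ≤ xiSigma m₂ P Y :=
  div_le_div_of_nonneg_right
    (integral_mono_of_nonneg (.of_forall fun _ => variance_nonneg _ _)
      (integrable_variance_condExp_indicator hY)
      (.of_forall fun y => variance_condExp_mono h hm₂ (memLp_indicator_setOf_le hY y)))
    (integral_nonneg fun _ => variance_nonneg _ _)

lemma xiSigma_le_one (hm : m ≤ mΩ) (hY : Measurable Y) : xiSigma m P Y ≤ 1 := by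
  refine (xiSigma_mono hm le_rfl hY).trans ?_
  have hself y : P⟦{ω | y ≤ Y ω} | mΩ⟧ = {ω | y ≤ Y ω}.indicator fun _ => 1 :=
    condExp_of_stronglyMeasurable le_rfl
      (stronglyMeasurable_const.indicator (measurableSet_le measurable_const hY))
      ((integrable_const 1).indicator (measurableSet_le measurable_const hY))
  simp only [xiSigma, hself]
  exact div_self_le_one _

end Xi

section T

variable {Ω α β : Type*} [mΩ : MeasurableSpace Ω] [MeasurableSpace α] [MeasurableSpace β]
  {P : Measure Ω} [IsProbabilityMeasure P] {q : ℕ} {Y : Fin q → Ω → ℝ} {X : Ω → α} {Z : Ω → β}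

lemma sigmaPast_le (hY : ∀ i, Measurable (Y i)) (i : Fin q) : sigmaPast Y i ≤ mΩ :=
  iSup₂_le fun j _ => (hY j).comap_le

lemma T_le_T_of_forall_xiSigma_le (hY : ∀ i, Measurable (Y i))
    (h : ∀ i, xiSigma (MeasurableSpace.comap Z inferInstance ⊔ sigmaPast Y i) P (Y i)
      ≤ xiSigma (MeasurableSpace.comap X inferInstance ⊔ sigmaPast Y i) P (Y i)) :
    T P Y Z ≤ T P Y X := by
  have hden : 0 ≤ (q : ℝ) - ∑ i, xiSigma (sigmaPast Y i) P (Y i) := by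
    have := Finset.sum_le_sum fun i (_ : i ∈ Finset.univ) =>
      xiSigma_le_one (P := P) (sigmaPast_le hY i) (hY i)
    simpa using this
  exact sub_le_sub_left
    (div_le_div_of_nonneg_right (sub_le_sub_left (Finset.sum_le_sum fun i _ => h i) _) hden) 1

lemma T_le_T_of_comap_le (hY : ∀ i, Measurable (Y i)) (hX : Measurable X)
    (hZX : MeasurableSpace.comap Z inferInstance ≤ MeasurableSpace.comap X inferInstance) :
    T P Y Z ≤ T P Y X :=
  T_le_T_of_forall_xiSigma_le hY fun i => xiSigma_mono (sup_le_sup_right hZX _)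
    (sup_le hX.comap_le (sigmaPast_le hY i)) (hY i)

lemma T_le_T_of_condIndepFun [StandardBorelSpace Ω] (hX : Measurable X) (hZ : Measurable Z)
    (hY : ∀ i, Measurable (Y i))
    (hCI : CondIndepFun (MeasurableSpace.comap X inferInstance) hX.comap_le
      (fun ω i => Y i ω) Z P) :
    T P Y Z ≤ T P Y X := by
  have hYvec : Measurable fun ω i => Y i ω := measurable_pi_lambda _ hY
  have hYi i : Measurable[MeasurableSpace.comap (fun ω i => Y i ω) inferInstance] (Y i) :=
    (measurable_pi_apply i).comp (comap_measurable (fun ω (j : Fin q) => Y j ω))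
  refine T_le_T_of_forall_xiSigma_le hY fun i => ?_
  have hCI₀ : CondIndep (MeasurableSpace.comap X inferInstance)
      (MeasurableSpace.comap (fun ω i => Y i ω) inferInstance)
      (MeasurableSpace.comap Z inferInstance) hX.comap_le P :=
    (condIndepFun_iff_condIndep _ _ _ _ _).1 hCI
  have hpast : sigmaPast Y i ≤ MeasurableSpace.comap (fun ω i => Y i ω) inferInstance :=
    iSup₂_le fun j _ => (hYi j).comap_le
  have hCI' := condIndep_sup_left_of_le hCI₀ hYvec.comap_le hZ.comap_le hpast
  calc xiSigma (MeasurableSpace.comap Z inferInstance ⊔ sigmaPast Y i) P (Y i)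
      ≤ xiSigma (MeasurableSpace.comap X inferInstance ⊔ sigmaPast Y i
          ⊔ MeasurableSpace.comap Z inferInstance) P (Y i) :=
        xiSigma_mono (sup_le le_sup_right (le_sup_right.trans le_sup_left))
          (sup_le (sup_le hX.comap_le (sigmaPast_le hY i)) hZ.comap_le) (hY i)
    _ = xiSigma (MeasurableSpace.comap X inferInstance ⊔ sigmaPast Y i) P (Y i) :=
        xiSigma_congr fun y => condExp_indicator_sup_ae_eq_of_condIndep hCI' hYvec.comap_le
          hZ.comap_le (measurableSet_le measurable_const (hYi i))

end T

theorem T_data_processing_inequality_general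
    {Ω : Type*} [MeasurableSpace Ω] [StandardBorelSpace Ω]
    (P : Measure Ω) [IsProbabilityMeasure P]
    {p q r : ℕ} (X : Ω → (Fin p → ℝ)) (Z : Ω → (Fin r → ℝ)) (Y : Fin q → Ω → ℝ)
    (hX : Measurable X) (hZ : Measurable Z) (hY : ∀ i, Measurable (Y i))
    (hCI : CondIndepFun (MeasurableSpace.comap X inferInstance) hX.comap_le
      (fun ω => fun i => Y i ω) Z P) :
    T P Y Z ≤ T P Y X ∧
      ∀ (r' : ℕ) (h : (Fin p → ℝ) → (Fin r' → ℝ)), Measurable h →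
        T P Y (fun ω => h (X ω)) ≤ T P Y X :=
  ⟨T_le_T_of_condIndepFun hX hZ hY hCI, fun _ _ hh =>
    T_le_T_of_comap_le hY hX (hh.comp (comap_measurable X)).comap_le⟩

theorem T_data_processing_inequality
    {Ω : Type*} [MeasurableSpace Ω] [StandardBorelSpace Ω] [Nonempty Ω]
    (P : Measure Ω) [IsProbabilityMeasure P]
    {p q r : ℕ} (X : Ω → (Fin p → ℝ)) (Z : Ω → (Fin r → ℝ)) (Y : Fin q → Ω → ℝ)
    (hX : Measurable X) (hZ : Measurable Z) (hY : ∀ i, Measurable (Y i))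
    (hnd : ∀ i, Nondegenerate P (Y i))
    (hCI : CondIndepFun (MeasurableSpace.comap X inferInstance) hX.comap_le
      (fun ω => fun i => Y i ω) Z P) :
    T P Y Z ≤ T P Y X ∧
      ∀ (r' : ℕ) (h : (Fin p → ℝ) → (Fin r' → ℝ)), Measurable h →
        T P Y (fun ω => h (X ω)) ≤ T P Y X :=
  T_data_processing_inequality_general P X Z Y hX hZ hY hCI
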